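/- arXiv:1112.3314 — 4 statements merged into one kernel-verified Lean document; each statement's English description precedes it below -/
import Mathlib

section
/- For the 4×4 matrix T = [[1,z,z,z],[1,0,0,z],[1,z,0,0],[1,0,z,0]] evaluated at z = -1, the trace of T^L equals 2^{L/2+1} cos(πL/2) + 2 cos(πL/3) for every positive integer L. -/
/-!
The characteristic polynomial of `T3neg1` is `X⁴ - X³ + 3X² - 2X + 2 = (X² + 2)(X² - X + 1)`,
with roots `±i√2` and `e^{±iπ/3}`, so `Tr(T3neg1 ^ L)` is the power sum
`(i√2)^L + (-i√2)^L + e^{iπL/3} + e^{-iπL/3}`, which is the right-hand side.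
Instead of diagonalising, note that both sides solve the linear recurrence with this
characteristic polynomial (the trace by Cayley–Hamilton, each summand of the right-hand side
because it solves the recurrence of one quadratic factor), and they agree for `L < 4`.
-/

/-- The row-to-row transfer matrix `T_3(z)` for the Witten index of the supersymmetric
model on the 3-leg triangular ladder, evaluated at activity `z = -1`. -/
noncomputable def T3neg1 : Matrix (Fin 4) (Fin 4) ℝ :=
  !![1, -1, -1, -1;
     1,  0,  0, -1;
     1, -1,  0,  0;
     1,  0, -1,  0]

open Real Finset Polynomial

theorem LinearRecurrence.isSolution_map_pow_of_aeval_charPoly_eq_zero {R A : Type*} [CommRing R]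
    [Ring A] [Algebra R A] (E : LinearRecurrence R) (f : A →ₗ[R] R) {a : A}
    (ha : aeval a E.charPoly = 0) : E.IsSolution fun n ↦ f (a ^ n) := by
  have hpow : a ^ E.order = ∑ i, E.coeffs i • a ^ (i : ℕ) := by
    simpa [charPoly, aeval_monomial, sub_eq_zero, Algebra.smul_def] using ha
  intro n
  simp only [pow_add, hpow, mul_sum, mul_smul_comm, map_sum, map_smul, smul_eq_mul]

noncomputable def recurrenceT3neg1 : LinearRecurrence ℝ := ⟨4, ![-2, 2, -3, 1]⟩

namespace recurrenceT3neg1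

theorem charPoly_eq : recurrenceT3neg1.charPoly = (X ^ 2 + 2) * (X ^ 2 - X + 1) := by
  change monomial 4 1 - ∑ i : Fin 4, monomial i (![-2, 2, -3, 1] i) = _
  rw [Fin.sum_univ_four]
  change monomial 4 1 - (monomial 0 (-2) + monomial 1 2 + monomial 2 (-3) + monomial 3 1) = _
  simp only [← C_mul_X_pow_eq_monomial, map_neg, map_one, map_ofNat C]
  ring

theorem isSolution_iff (u : ℕ → ℝ) : recurrenceT3neg1.IsSolution u ↔
    ∀ n, u (n + 4) = u (n + 3) - 3 * u (n + 2) + 2 * u (n + 1) - 2 * u n := by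
  change (∀ n, u (n + 4) = ∑ i : Fin 4, ![-2, 2, -3, 1] i * u (n + i)) ↔ _
  refine forall_congr' fun n ↦ ?_
  rw [Fin.sum_univ_four]
  change _ = -2 * u n + 2 * u (n + 1) + -3 * u (n + 2) + 1 * u (n + 3) ↔ _
  constructor <;> intro h <;> linarith

theorem isSolution_of_add_two_eq_neg_two_mul {u : ℕ → ℝ} (hu : ∀ n, u (n + 2) = -2 * u n) :
    recurrenceT3neg1.IsSolution u :=
  (isSolution_iff u).2 fun n ↦ by linear_combination hu (n + 2) - hu (n + 1) + hu n

theorem isSolution_of_add_two_eq_sub {u : ℕ → ℝ} (hu : ∀ n, u (n + 2) = u (n + 1) - u n) :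
    recurrenceT3neg1.IsSolution u :=
  (isSolution_iff u).2 fun n ↦ by linear_combination hu (n + 2) + 2 * hu n

end recurrenceT3neg1

theorem T3neg1_sq_add_two_mul_sq_sub_add_one :
    (T3neg1 ^ 2 + 2) * (T3neg1 ^ 2 - T3neg1 + 1) = 0 := by
  ext i j
  fin_cases i <;> fin_cases j <;>
    simp [T3neg1, pow_succ, Matrix.mul_apply, Fin.sum_univ_four, Matrix.one_apply,
      Matrix.ofNat_apply] <;> norm_num

theorem isSolution_trace_T3neg1_pow :
    recurrenceT3neg1.IsSolution fun n ↦ (T3neg1 ^ n).trace := by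
  refine recurrenceT3neg1.isSolution_map_pow_of_aeval_charPoly_eq_zero
    (Matrix.traceLinearMap (Fin 4) ℝ ℝ) ?_
  simpa [recurrenceT3neg1.charPoly_eq, map_ofNat] using T3neg1_sq_add_two_mul_sq_sub_add_one

theorem two_rpow_mul_cos_pi_mul_div_two_add_two (x : ℝ) :
    2 ^ ((x + 2) / 2 + 1) * cos (π * (x + 2) / 2) =
      -2 * (2 ^ (x / 2 + 1) * cos (π * x / 2)) := by
  rw [show (x + 2) / 2 + 1 = (x / 2 + 1) + 1 by ring, show π * (x + 2) / 2 = π * x / 2 + π by ring,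
    rpow_add_one two_ne_zero, cos_add_pi]
  ring

theorem cos_pi_mul_div_three_add_two (x : ℝ) :
    cos (π * (x + 2) / 3) = cos (π * (x + 1) / 3) - cos (π * x / 3) := by
  have h := cos_add_cos (π * (x + 2) / 3) (π * x / 3)
  rw [show (π * (x + 2) / 3 + π * x / 3) / 2 = π * (x + 1) / 3 by ring,
    show (π * (x + 2) / 3 - π * x / 3) / 2 = π / 3 by ring, cos_pi_div_three] at h
  linarith

theorem isSolution_two_rpow_mul_cos_add_two_mul_cos : recurrenceT3neg1.IsSolution fun n : ℕ ↦
    2 ^ ((n : ℝ) / 2 + 1) * cos (π * n / 2) + 2 * cos (π * n / 3) := by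
  refine (recurrenceT3neg1.is_sol_iff_mem_solSpace _).2 (add_mem ?_ ?_) <;>
    rw [← LinearRecurrence.is_sol_iff_mem_solSpace]
  · refine recurrenceT3neg1.isSolution_of_add_two_eq_neg_two_mul fun n ↦ ?_
    push_cast
    exact two_rpow_mul_cos_pi_mul_div_two_add_two n
  · refine recurrenceT3neg1.isSolution_of_add_two_eq_sub fun n ↦ ?_
    push_cast
    rw [cos_pi_mul_div_three_add_two]
    ring

theorem trace_T3neg1_pow_of_lt_four {n : ℕ} (hn : n < 4) :
    (T3neg1 ^ n).trace = 2 ^ ((n : ℝ) / 2 + 1) * cos (π * n / 2) + 2 * cos (π * n / 3) := by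
  have htrace : (T3neg1 ^ n).trace = ![4, 1, -5, -2] ⟨n, hn⟩ := by
    interval_cases n <;>
      simp [T3neg1, pow_succ, Matrix.trace, Fin.sum_univ_four] <;> norm_num
  rw [htrace]
  interval_cases n <;> push_cast
  · norm_num
  · simp [cos_pi_div_two, cos_pi_div_three]
  · rw [show π * 2 / 2 = π by ring, show π * 2 / 3 = π - π / 3 by ring, cos_pi, cos_pi_sub,
      cos_pi_div_three]
    norm_num
  · rw [show π * 3 / 2 = π / 2 + π by ring, show π * 3 / 3 = π by ring, cos_add_pi,
      cos_pi_div_two, cos_pi]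
    norm_num

theorem trace_T3neg1_pow_general (L : ℕ) :
    (T3neg1 ^ L).trace =
      2 ^ ((L : ℝ) / 2 + 1) * Real.cos (Real.pi * L / 2)
        + 2 * Real.cos (Real.pi * L / 3) := by
  have h := (recurrenceT3neg1.eq_iff_eqOn_range_order _ _ isSolution_trace_T3neg1_pow
    isSolution_two_rpow_mul_cos_add_two_mul_cos).2 fun n hn ↦
      trace_T3neg1_pow_of_lt_four (Finset.mem_range.1 hn)
  exact congrFun h L

/-- For every positive integer `L`,
`Tr(T_3(-1)^L) = 2^{L/2+1} cos(π L/2) + 2 cos(π L/3)`. -/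
theorem trace_T3neg1_pow (L : ℕ) (hL : 0 < L) :
    (T3neg1 ^ L).trace =
      2 ^ ((L : ℝ) / 2 + 1) * Real.cos (Real.pi * L / 2)
        + 2 * Real.cos (Real.pi * L / 3) :=
  trace_T3neg1_pow_general L
end

section
/- Let Z_L satisfy Z_2 = 3, Z_3 = 5, Z_4 = 3, and Z_L = Z_{L-2} + 2·Z_{L-3} - d_L for L ≥ 5, where d_L = 2 if L ≡ 1 mod 3 and d_L = 0 otherwise. Then Z_L = (-1)^L λ_1^{L/2} + (-1)^L λ_2^{L/2} + λ_3^{L/2} - (-1)^a, where L = 3l + a with a ∈ {-1,0,1}, and λ_1, λ_2, λ_3 are the roots of λ^3 - 2λ^2 + λ - 4 = 0 (λ_3 real, λ_2 = conj(λ_1)). -/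
open Complex in
lemma re_sqrt_nonneg' {z : ℂ} (hz : z ≠ 0) : 0 ≤ (z ^ (1/2 : ℂ)).re := by
  rw [cpow_def_of_ne_zero hz, Complex.exp_re]
  apply mul_nonneg (Real.exp_nonneg _)
  apply Real.cos_nonneg_of_mem_Icc
  constructor
  · simp [Complex.log_im, Complex.mul_im, Complex.mul_re]
    nlinarith [Complex.neg_pi_lt_arg z, Real.pi_pos]
  · simp [Complex.log_im, Complex.mul_im, Complex.mul_re]
    nlinarith [Complex.arg_le_pi z, Real.pi_pos]

open Complex in
lemma im_sqrt_real' {z : ℂ} (hz : z ≠ 0) (him : z.im = 0) (hre : 0 ≤ z.re) :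
    (z ^ (1/2 : ℂ)).im = 0 := by
  rw [cpow_def_of_ne_zero hz, Complex.exp_im]
  have harg : z.arg = 0 := by
    rw [Complex.arg_eq_zero_iff]
    exact ⟨hre, him⟩
  simp [Complex.log_im, Complex.mul_im, Complex.mul_re, harg]

lemma branch_complex' {μ : ℂ} (hre : 0 ≤ μ.re) (him : μ.im ≠ 0) :
    μ ^ 3 - μ - 2 ≠ 0 := by
  intro h
  set x := μ.re with hx
  set y := μ.im with hy
  have hRe : x^3 - 3*x*y^2 - x - 2 = 0 := by
    have := congrArg Complex.re h
    simp [pow_succ, Complex.mul_re, Complex.mul_im, Complex.sub_re] at this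
    ring_nf at this ⊢
    linarith [this]
  have hIm : 3*x^2*y - y^3 - y = 0 := by
    have := congrArg Complex.im h
    simp [pow_succ, Complex.mul_re, Complex.mul_im, Complex.sub_im] at this
    ring_nf at this ⊢
    linarith [this]
  have hy2 : y^2 = 3*x^2 - 1 := by
    have : y * (3*x^2 - y^2 - 1) = 0 := by ring_nf; linarith [hIm]
    rcases mul_eq_zero.1 this with h' | h'
    · exact absurd h' him
    · linarith
  rw [hy2] at hRe
  nlinarith [mul_nonneg hre (sq_nonneg (2*x - 1)), sq_nonneg (4*x - 1), sq_nonneg x]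

lemma branch_real' {μ : ℂ} (hre : 0 ≤ μ.re) (him : μ.im = 0) :
    μ ^ 3 - μ + 2 ≠ 0 := by
  intro h
  set x := μ.re
  have hRe : x^3 - x + 2 = 0 := by
    have := congrArg Complex.re h
    simp [pow_succ, Complex.mul_re, Complex.mul_im, him] at this
    ring_nf at this ⊢
    linarith [this]
  nlinarith [mul_nonneg hre (sq_nonneg (x - 1)), sq_nonneg (2*x - 1)]

/-- The ground-state count `Z_L` of the 2-leg triangular ladder, defined by
`Z_2 = 3`, `Z_3 = 5`, `Z_4 = 3` and `Z_L = Z_{L-2} + 2 Z_{L-3} - d_L` where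
`d_L = 2` for `L ≡ 1 mod 3` and `d_L = 0` otherwise, has the closed form
`Z_L = (-1)^L λ_1^{L/2} + (-1)^L λ_2^{L/2} + λ_3^{L/2} - (-1)^a`, for `L = 3l + a`
with `a ∈ {-1,0,1}`, where `λ_1, λ_2, λ_3` are the roots of `λ^3 - 2λ^2 + λ - 4 = 0`
with `λ_3` real and `λ_2 = conj(λ_1)`. -/
theorem ground_state_count_2leg_closed_form
    (Z : ℕ → ℂ) (h2 : Z 2 = 3) (h3 : Z 3 = 5) (h4 : Z 4 = 3)
    (hrec : ∀ L : ℕ, 5 ≤ L →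
      Z L = Z (L - 2) + 2 * Z (L - 3) - (if L % 3 = 1 then 2 else 0))
    (lam1 lam2 lam3 : ℂ)
    (hroot1 : lam1 ^ 3 - 2 * lam1 ^ 2 + lam1 - 4 = 0)
    (hroot2 : lam2 ^ 3 - 2 * lam2 ^ 2 + lam2 - 4 = 0)
    (hroot3 : lam3 ^ 3 - 2 * lam3 ^ 2 + lam3 - 4 = 0)
    (hreal : lam3.im = 0)
    (hconj : lam2 = starRingEnd ℂ lam1)
    (hdistinct : lam1 ≠ lam2 ∧ lam1 ≠ lam3 ∧ lam2 ≠ lam3) :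
    ∀ (L : ℕ) (l a : ℤ), 2 ≤ L → (a = -1 ∨ a = 0 ∨ a = 1) → (L : ℤ) = 3 * l + a →
      Z L = (-1 : ℂ) ^ L * lam1 ^ ((L : ℂ) / 2)
          + (-1 : ℂ) ^ L * lam2 ^ ((L : ℂ) / 2)
          + lam3 ^ ((L : ℂ) / 2) - (-1 : ℂ) ^ a := by
  -- nonvanishing of the roots
  have hne1 : lam1 ≠ 0 := by intro h; rw [h] at hroot1; norm_num at hroot1
  have hne2 : lam2 ≠ 0 := by intro h; rw [h] at hroot2; norm_num at hroot2
  have hne3 : lam3 ≠ 0 := by intro h; rw [h] at hroot3; norm_num at hroot3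
  -- square roots
  set μ1 := lam1 ^ (1/2 : ℂ) with hμ1def
  set μ2 := lam2 ^ (1/2 : ℂ) with hμ2def
  set μ3 := lam3 ^ (1/2 : ℂ) with hμ3def
  have hsq1 : μ1 ^ 2 = lam1 := by
    rw [hμ1def, sq, ← Complex.cpow_add _ _ hne1]; norm_num
  have hsq2 : μ2 ^ 2 = lam2 := by
    rw [hμ2def, sq, ← Complex.cpow_add _ _ hne2]; norm_num
  have hsq3 : μ3 ^ 2 = lam3 := by
    rw [hμ3def, sq, ← Complex.cpow_add _ _ hne3]; norm_num
  -- imaginary parts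
  have him1 : lam1.im ≠ 0 := by
    intro h
    exact hdistinct.1 (by rw [hconj, Complex.conj_eq_iff_im.2 h])
  have hμim1 : μ1.im ≠ 0 := by
    intro h
    apply him1
    rw [← hsq1, sq, Complex.mul_im, h]; ring
  have him2 : lam2.im ≠ 0 := by
    rw [hconj]; simpa using him1
  have hμim2 : μ2.im ≠ 0 := by
    intro h
    apply him2
    rw [← hsq2, sq, Complex.mul_im, h]; ring
  -- real part of lam3 is nonneg
  have hre3 : (0:ℝ) ≤ lam3.re := by
    have hx : lam3.re^3 - 2*lam3.re^2 + lam3.re - 4 = 0 := by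
      have := congrArg Complex.re hroot3
      simp [pow_succ, Complex.mul_re, Complex.mul_im, hreal] at this
      ring_nf at this ⊢
      linarith [this]
    nlinarith [sq_nonneg (lam3.re - 1), hx]
  have hμim3 : μ3.im = 0 := im_sqrt_real' hne3 hreal hre3
  -- branch selection
  have hfac1 : (μ1^3 - μ1 - 2) * (μ1^3 - μ1 + 2) = 0 := by
    have h6 : (μ1^2)^3 - 2*(μ1^2)^2 + μ1^2 - 4 = 0 := by rw [hsq1]; exact hroot1
    linear_combination h6
  have hq1 : μ1^3 - μ1 + 2 = 0 := by
    rcases mul_eq_zero.1 hfac1 with h | h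
    · exact absurd h (branch_complex' (re_sqrt_nonneg' hne1) hμim1)
    · exact h
  have hfac2 : (μ2^3 - μ2 - 2) * (μ2^3 - μ2 + 2) = 0 := by
    have h6 : (μ2^2)^3 - 2*(μ2^2)^2 + μ2^2 - 4 = 0 := by rw [hsq2]; exact hroot2
    linear_combination h6
  have hq2 : μ2^3 - μ2 + 2 = 0 := by
    rcases mul_eq_zero.1 hfac2 with h | h
    · exact absurd h (branch_complex' (re_sqrt_nonneg' hne2) hμim2)
    · exact h
  have hfac3 : (μ3^3 - μ3 - 2) * (μ3^3 - μ3 + 2) = 0 := by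
    have h6 : (μ3^2)^3 - 2*(μ3^2)^2 + μ3^2 - 4 = 0 := by rw [hsq3]; exact hroot3
    linear_combination h6
  have hq3 : μ3^3 - μ3 - 2 = 0 := by
    rcases mul_eq_zero.1 hfac3 with h | h
    · exact h
    · exact absurd h (branch_real' (re_sqrt_nonneg' hne3) hμim3)
  -- the three roots of x^3 - x - 2
  set t1 := -μ1 with ht1def
  set t2 := -μ2 with ht2def
  set t3 := μ3 with ht3def
  have ht1 : t1^3 = t1 + 2 := by rw [ht1def]; linear_combination -hq1
  have ht2 : t2^3 = t2 + 2 := by rw [ht2def]; linear_combination -hq2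
  have ht3 : t3^3 = t3 + 2 := by rw [ht3def]; linear_combination hq3
  have htsq1 : t1^2 = lam1 := by rw [ht1def, neg_sq]; exact hsq1
  have htsq2 : t2^2 = lam2 := by rw [ht2def, neg_sq]; exact hsq2
  have htsq3 : t3^2 = lam3 := by rw [ht3def]; exact hsq3
  have hd12 : t1 ≠ t2 := fun h => hdistinct.1 (by rw [← htsq1, ← htsq2, h])
  have hd13 : t1 ≠ t3 := fun h => hdistinct.2.1 (by rw [← htsq1, ← htsq3, h])
  have hd23 : t2 ≠ t3 := fun h => hdistinct.2.2 (by rw [← htsq2, ← htsq3, h])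
  -- symmetric function identities
  have p12 : t1^2 + t1*t2 + t2^2 = 1 := by
    have h : (t1 - t2) * (t1^2 + t1*t2 + t2^2 - 1) = 0 := by
      linear_combination ht1 - ht2
    rcases mul_eq_zero.1 h with h' | h'
    · exact absurd (sub_eq_zero.1 h') hd12
    · linear_combination h'
  have p13 : t1^2 + t1*t3 + t3^2 = 1 := by
    have h : (t1 - t3) * (t1^2 + t1*t3 + t3^2 - 1) = 0 := by
      linear_combination ht1 - ht3
    rcases mul_eq_zero.1 h with h' | h'
    · exact absurd (sub_eq_zero.1 h') hd13
    · linear_combination h'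
  have p23 : t2^2 + t2*t3 + t3^2 = 1 := by
    have h : (t2 - t3) * (t2^2 + t2*t3 + t3^2 - 1) = 0 := by
      linear_combination ht2 - ht3
    rcases mul_eq_zero.1 h with h' | h'
    · exact absurd (sub_eq_zero.1 h') hd23
    · linear_combination h'
  have he1 : t1 + t2 + t3 = 0 := by
    have h : (t2 - t3) * (t1 + t2 + t3) = 0 := by linear_combination p12 - p13
    rcases mul_eq_zero.1 h with h' | h'
    · exact absurd (sub_eq_zero.1 h') hd23
    · exact h'
  have hS2 : t1^2 + t2^2 + t3^2 = 2 := by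
    linear_combination (2/3 : ℂ)*p12 + (2/3 : ℂ)*p13 + (2/3 : ℂ)*p23
      - (1/3 : ℂ)*(t1 + t2 + t3)*he1
  -- the key strong induction
  have key : ∀ n : ℕ, Z (n+2) =
      t1^(n+2) + t2^(n+2) + t3^(n+2) - (if (n+2) % 3 = 0 then (1:ℂ) else -1) := by
    intro n
    induction n using Nat.strong_induction_on with
    | _ n ih =>
      match n, ih with
      | 0, _ =>
        rw [h2]; norm_num
        linear_combination -hS2
      | 1, _ =>
        rw [h3]; norm_num
        linear_combination -(ht1 + ht2 + ht3) - he1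
      | 2, _ =>
        rw [h4]; norm_num
        linear_combination (-t1)*ht1 + (-t2)*ht2 + (-t3)*ht3 - hS2 - 2*he1
      | (m+3), ih =>
        have i1 := ih (m+1) (by omega)
        have i2 := ih m (by omega)
        have hr := hrec (m+5) (by omega)
        have e2 : m+5-2 = m+3 := by omega
        have e3 : m+5-3 = m+2 := by omega
        rw [e2, e3] at hr
        rw [show m+3+2 = m+5 from by omega, hr, i1, i2]
        rcases (show m % 3 = 0 ∨ m % 3 = 1 ∨ m % 3 = 2 from by omega) with h | h | h
        · rw [show (m+1+2) % 3 = 0 from by omega, show (m+2) % 3 = 2 from by omega,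
            show (m+5) % 3 = 2 from by omega]
          norm_num
          linear_combination (-t1^(m+2))*ht1 + (-t2^(m+2))*ht2 + (-t3^(m+2))*ht3
        · rw [show (m+1+2) % 3 = 1 from by omega, show (m+2) % 3 = 0 from by omega,
            show (m+5) % 3 = 0 from by omega]
          norm_num
          linear_combination (-t1^(m+2))*ht1 + (-t2^(m+2))*ht2 + (-t3^(m+2))*ht3
        · rw [show (m+1+2) % 3 = 2 from by omega, show (m+2) % 3 = 1 from by omega,
            show (m+5) % 3 = 1 from by omega]
          norm_num
          linear_combination (-t1^(m+2))*ht1 + (-t2^(m+2))*ht2 + (-t3^(m+2))*ht3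
  -- conclusion
  intro L l a hL2 ha hLa
  obtain ⟨n, rfl⟩ : ∃ n, L = n + 2 := ⟨L - 2, by omega⟩
  have hcpow : ∀ w : ℂ, w ^ (((n+2 : ℕ) : ℂ)/2) = (w ^ (1/2 : ℂ)) ^ (n+2) := by
    intro w
    rw [show (((n+2 : ℕ) : ℂ)/2) = ((n+2 : ℕ) : ℂ) * (1/2 : ℂ) from by ring,
      Complex.cpow_nat_mul]
  rw [hcpow, hcpow, hcpow, ← hμ1def, ← hμ2def, ← hμ3def, key n]
  have ha' : (-1 : ℂ) ^ a = (if (n+2) % 3 = 0 then (1:ℂ) else -1) := by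
    rcases ha with rfl | rfl | rfl
    · rw [show (n+2) % 3 = 2 from by omega]; norm_num
    · rw [show (n+2) % 3 = 0 from by omega]; norm_num
    · rw [show (n+2) % 3 = 1 from by omega]; norm_num
  rw [ha', ← mul_pow, ← mul_pow, neg_one_mul, neg_one_mul, ← ht1def, ← ht2def]
end

section
/- Let Q be nilpotent on a finite-dimensional space graded by fermion number F (with Q raising F by 1), and H = QQ† + Q†Q. Then tr((-1)^F e^{-βH}) is independent of β and equals the Euler characteristic Σ_n (-1)^n dim(ker Q / im Q)_n. -/
/-!
Since `Q² = 0`, the Hamiltonian `H = QQ† + Q†Q` commutes with `Q`, while `(-1)^F` anticommutes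
with it. For `k ≥ 1` the two halves of `tr((-1)^F H^k)` therefore cancel by cyclicity of the
trace, so only the constant term of the exponential series survives and the index equals
`tr (-1)^F = Σ (-1)^n dim V_n`. Rank–nullity on each `V_n` gives
`dim V_n = dim Z_n + dim B_{n+1}` and `dim Z_n = dim H^n + dim B_n`, and the boundary terms
telescope away because `B_0 = B_N = 0`.
-/

open LinearMap Module Submodule

theorem Commute.self_anticommutator_of_mul_self_eq_zero {R : Type*} [Ring R] {q : R} (a : R)
    (hq : q * q = 0) : Commute q (q * a + a * q) :=
  calc q * (q * a + a * q) = q * a * q := by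
        rw [mul_add, ← mul_assoc, hq, zero_mul, zero_add, mul_assoc]
    _ = (q * a + a * q) * q := by rw [add_mul, mul_assoc a, hq, mul_zero, add_zero]

section Supertrace

variable {R M : Type*} [CommRing R] [AddCommGroup M] [Module R M]

theorem LinearMap.trace_mul_mul_anticommutator_eq_zero {s q p : Module.End R M}
    (a : Module.End R M) (hsq : s * q = -(q * s)) (hpq : Commute p q) :
    trace R M (s * p * (q * a + a * q)) = 0 := by
  have hqa : s * p * (q * a) = -(q * (s * p * a)) := by
    rw [← mul_assoc, mul_assoc s, hpq.eq, ← mul_assoc, hsq]; noncomm_ring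
  rw [mul_add, hqa, map_add, map_neg, trace_mul_comm R q, ← mul_assoc, neg_add_cancel]

theorem LinearMap.trace_mul_anticommutator_pow_succ_eq_zero {s q : Module.End R M}
    (a : Module.End R M) (hsq : s * q = -(q * s)) (hq : q * q = 0) (k : ℕ) :
    trace R M (s * (q * a + a * q) ^ (k + 1)) = 0 := by
  rw [pow_succ, ← mul_assoc]
  exact trace_mul_mul_anticommutator_eq_zero a hsq
    ((Commute.self_anticommutator_of_mul_self_eq_zero a hq).pow_right k).symm

end Supertrace

theorem LinearMap.trace_comp_exp_eq_trace {𝕜 E : Type*} [RCLike 𝕜] [NormedAddCommGroup E]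
    [NormedSpace 𝕜 E] [FiniteDimensional 𝕜 E] (S T : E →L[𝕜] E)
    (h : ∀ k : ℕ, trace 𝕜 E ((S : E →ₗ[𝕜] E) * (T : E →ₗ[𝕜] E) ^ (k + 1)) = 0) :
    trace 𝕜 E ((S ∘L NormedSpace.exp T : E →L[𝕜] E) : E →ₗ[𝕜] E) = trace 𝕜 E S := by
  have := FiniteDimensional.complete 𝕜 E
  let φ : (E →L[𝕜] E) →ₗ[𝕜] 𝕜 :=
    trace 𝕜 E ∘ₗ mulLeft 𝕜 (S : E →ₗ[𝕜] E) ∘ₗ ContinuousLinearMap.coeLM 𝕜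
  have hφ : Continuous φ := φ.continuous_of_finiteDimensional
  have hexp := (NormedSpace.exp_series_hasSum_exp' (𝕂 := 𝕜) T).map φ hφ
  have hsingle : HasSum (fun n : ℕ => φ ((n.factorial⁻¹ : 𝕜) • T ^ n)) (trace 𝕜 E S) := by
    convert hasSum_single 0 fun n hn => ?_ using 1
    · simp [φ]
    · obtain ⟨k, rfl⟩ := Nat.exists_eq_succ_of_ne_zero hn
      simp [φ, h k]
  exact hexp.unique hsingle

theorem DirectSum.IsInternal.mul_eq_neg_mul_of_degree_one {R M : Type*} [Ring R]
    [AddCommGroup M] [Module R M] {V : ℕ → Submodule R M} (hV : DirectSum.IsInternal V)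
    {s q : Module.End R M} (hs : ∀ n, ∀ x ∈ V n, s x = ((-1 : R) ^ n) • x)
    (hq : ∀ n, ∀ x ∈ V n, q x ∈ V (n + 1)) :
    s * q = -(q * s) := by
  ext x
  refine iSup_induction V (motive := fun x => s (q x) = -q (s x))
    (hV.submodule_iSup_eq_top ▸ mem_top) (fun n x hx => ?_) (by simp)
    (fun x y hx hy => by simp [hx, hy, add_comm])
  rw [hs _ _ (hq n x hx), hs n x hx, map_smul, pow_succ, mul_smul]
  simp

theorem LinearMap.trace_eq_sum_mul_finrank {K M : Type*} [Field K] [AddCommGroup M] [Module K M]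
    [FiniteDimensional K M] {V : ℕ → Submodule K M} (hV : DirectSum.IsInternal V) {N : ℕ}
    (hVN : ∀ n, N ≤ n → V n = ⊥) {s : Module.End K M} (c : ℕ → K)
    (hs : ∀ n, ∀ x ∈ V n, s x = c n • x) :
    trace K M s = ∑ n ∈ Finset.range N, c n * finrank K (V n) := by
  have hfin : {n | V n ≠ ⊥}.Finite :=
    (Set.finite_lt_nat N).subset fun n hn => by_contra fun hlt => hn (hVN n (not_lt.mp hlt))
  have hmaps : ∀ n, Set.MapsTo s (V n) (V n) := fun n x hx => by
    rw [SetLike.mem_coe, hs n x hx]; exact (V n).smul_mem _ hx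
  have hrestrict : ∀ n, s.restrict (hmaps n) = c n • LinearMap.id := fun n => by
    ext ⟨x, hx⟩; exact hs n x hx
  rw [trace_eq_sum_trace_restrict' hV hfin hmaps]
  simp only [hrestrict, map_smul, trace_id, smul_eq_mul]
  refine Finset.sum_subset (fun n hn => ?_) (fun n _ hn => ?_)
  · simp only [Set.Finite.mem_toFinset, Set.mem_ofPred_eq, Finset.mem_range] at hn ⊢
    exact by_contra fun hlt => hn (hVN n (not_lt.mp hlt))
  · simp only [Set.Finite.mem_toFinset, Set.mem_ofPred_eq, not_not] at hn
    rw [hn, finrank_bot, Nat.cast_zero, mul_zero]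

theorem Submodule.finrank_map_add_finrank_ker_inf {K M M' : Type*} [DivisionRing K]
    [AddCommGroup M] [Module K M] [AddCommGroup M'] [Module K M'] (f : M →ₗ[K] M')
    (W : Submodule K M) [FiniteDimensional K W] :
    finrank K (W.map f) + finrank K (ker f ⊓ W : Submodule K M) = finrank K W := by
  rw [← range_domRestrict, ← (comapSubtypeEquivOfLe inf_le_right).finrank_eq, comap_inf,
    comap_subtype_self, inf_top_eq, ← ker_domRestrict]
  exact finrank_range_add_finrank_ker _

theorem Submodule.finrank_quotient_comap_subtype_add_finrank {K M : Type*} [DivisionRing K]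
    [AddCommGroup M] [Module K M] {B Z : Submodule K M} [FiniteDimensional K Z] (hBZ : B ≤ Z) :
    finrank K (Z ⧸ comap Z.subtype B) + finrank K B = finrank K Z := by
  rw [← (comapSubtypeEquivOfLe hBZ).finrank_eq]
  exact finrank_quotient_add_finrank _

namespace DirectSum

variable {R M : Type*} [Semiring R] [AddCommMonoid M] [Module R M] (V : ℕ → Submodule R M)
  [Decomposition V] {q : M →ₗ[R] M}

theorem decompose_map_apply_succ (hq : ∀ n, ∀ x ∈ V n, q x ∈ V (n + 1)) (y : M) (n : ℕ) :
    (decompose V (q y) (n + 1) : M) = q (decompose V y n) := by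
  induction y using Decomposition.inductionOn V with
  | zero => simp
  | add y z hy hz => simp [hy, hz]
  | @homogeneous i y =>
    obtain ⟨y, hy⟩ := y
    rcases eq_or_ne i n with rfl | hne
    · rw [decompose_of_mem_same V (hq i y hy), decompose_of_mem_same V hy]
    · rw [decompose_of_mem_ne V (hq i y hy) (by omega), decompose_of_mem_ne V hy hne, map_zero]

theorem decompose_map_apply_zero (hq : ∀ n, ∀ x ∈ V n, q x ∈ V (n + 1)) (y : M) :
    (decompose V (q y) 0 : M) = 0 := by
  induction y using Decomposition.inductionOn V with
  | zero => simp
  | add y z hy hz => simp [hy, hz]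
  | @homogeneous i y => exact decompose_of_mem_ne V (hq i y y.2) (Nat.succ_ne_zero i)

theorem map_eq_range_inf_succ (hq : ∀ n, ∀ x ∈ V n, q x ∈ V (n + 1)) (n : ℕ) :
    (V n).map q = range q ⊓ V (n + 1) := by
  refine le_antisymm (map_le_iff_le_comap.mpr fun y hy => ⟨mem_range_self q y, hq n y hy⟩) ?_
  rintro x ⟨⟨y, rfl⟩, hx⟩
  have hdec := decompose_map_apply_succ V hq y n
  rw [decompose_of_mem_same V hx] at hdec
  exact ⟨_, (decompose V y n).2, hdec.symm⟩

theorem range_inf_zero_eq_bot (hq : ∀ n, ∀ x ∈ V n, q x ∈ V (n + 1)) :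
    range q ⊓ V 0 = ⊥ := by
  refine eq_bot_iff.mpr ?_
  rintro x ⟨⟨y, rfl⟩, hx⟩
  have hdec := decompose_map_apply_zero V hq y
  rwa [decompose_of_mem_same V hx] at hdec

end DirectSum

abbrev gradedCohomology {R M : Type*} [Ring R] [AddCommGroup M] [Module R M] (q : M →ₗ[R] M)
    (V : ℕ → Submodule R M) (n : ℕ) : Type _ :=
  ↥(ker q ⊓ V n) ⧸ comap (ker q ⊓ V n).subtype (range q ⊓ V n)

theorem sum_neg_one_pow_mul_finrank_eq_sum_finrank_gradedCohomology {K M : Type*}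
    [DivisionRing K] [AddCommGroup M] [Module K M] [FiniteDimensional K M] (V : ℕ → Submodule K M)
    [DirectSum.Decomposition V] {q : M →ₗ[K] M} (hq2 : q * q = 0)
    (hq : ∀ n, ∀ x ∈ V n, q x ∈ V (n + 1)) {N : ℕ} (hVN : V N = ⊥) :
    ∑ n ∈ Finset.range N, (-1 : ℤ) ^ n * finrank K (V n) =
      ∑ n ∈ Finset.range N, (-1 : ℤ) ^ n * finrank K (gradedCohomology q V n) := by
  let b : ℕ → ℤ := fun n => (-1) ^ n * finrank K (range q ⊓ V n : Submodule K M)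
  have hterm : ∀ n, (-1 : ℤ) ^ n * finrank K (V n) =
      (-1) ^ n * finrank K (gradedCohomology q V n) + (b n - b (n + 1)) := fun n => by
    rw [← (V n).finrank_map_add_finrank_ker_inf q, DirectSum.map_eq_range_inf_succ V hq,
      ← finrank_quotient_comap_subtype_add_finrank
        (inf_le_inf_right (V n) (range_le_ker_iff.mpr hq2))]
    push_cast [b]
    ring
  have hb0 : b 0 = 0 := by simp [b, DirectSum.range_inf_zero_eq_bot V hq]
  have hbN : b N = 0 := by simp [b, hVN]
  rw [Finset.sum_congr rfl fun n _ => hterm n, Finset.sum_add_distrib, Finset.sum_range_sub', hb0,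
    hbN, sub_zero, add_zero]

/-- The Witten index.  Let `E` be a finite-dimensional complex inner product space
graded by fermion number (an internal direct sum decomposition `V : ℕ → Submodule ℂ E`
with `V n = ⊥` for `n ≥ N`), let `Q` be nilpotent and raise the fermion number by one,
let `S = (-1)^F` be the grading sign operator, and `H = QQ† + Q†Q`.  Then
`tr((-1)^F e^{-βH})` is independent of `β` and equals the Euler characteristic
`Σ_n (-1)^n dim (ker Q / im Q)_n` of the `Q`-cohomology. -/
theorem witten_index_eq_euler_characteristic
    {E : Type*} [NormedAddCommGroup E] [InnerProductSpace ℂ E] [FiniteDimensional ℂ E]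
    (V : ℕ → Submodule ℂ E) (hV : DirectSum.IsInternal V)
    (N : ℕ) (hVN : ∀ n, N ≤ n → V n = ⊥)
    (Q : E →L[ℂ] E) (hQ : Q ∘L Q = 0)
    (hgrade : ∀ n, ∀ x ∈ V n, Q x ∈ V (n + 1))
    (S : E →L[ℂ] E) (hS : ∀ n, ∀ x ∈ V n, S x = ((-1 : ℂ) ^ n) • x)
    (H : E →L[ℂ] E)
    (hH : H = Q ∘L ContinuousLinearMap.adjoint Q + ContinuousLinearMap.adjoint Q ∘L Q) :
    ∀ β : ℝ,
      LinearMap.trace ℂ E ((S ∘L NormedSpace.exp ((-β : ℂ) • H)) : E →ₗ[ℂ] E) =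
      ((∑ n ∈ Finset.range N, (-1 : ℤ) ^ n *
          (Module.finrank ℂ
            (↥(LinearMap.ker (Q : E →ₗ[ℂ] E) ⊓ V n) ⧸
              Submodule.comap (LinearMap.ker (Q : E →ₗ[ℂ] E) ⊓ V n).subtype
                (LinearMap.range (Q : E →ₗ[ℂ] E) ⊓ V n)) : ℤ) : ℤ) : ℂ) := by
  intro β
  let _ := hV.chooseDecomposition
  have hQ2 : (Q : E →ₗ[ℂ] E) * Q = 0 := congrArg ContinuousLinearMap.toLinearMap hQ
  have hSQ : (S : E →ₗ[ℂ] E) * Q = -(Q * S) := hV.mul_eq_neg_mul_of_degree_one hS hgrade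
  have hsupertrace : ∀ k : ℕ,
      trace ℂ E ((S : E →ₗ[ℂ] E) * (((-β : ℂ) • H : E →L[ℂ] E) : E →ₗ[ℂ] E) ^ (k + 1)) = 0 := by
    intro k
    rw [ContinuousLinearMap.toLinearMap_smul, smul_pow, mul_smul_comm, map_smul, hH]
    simp only [ContinuousLinearMap.toLinearMap_add, ContinuousLinearMap.toLinearMap_comp,
      ← Module.End.mul_eq_comp]
    rw [trace_mul_anticommutator_pow_succ_eq_zero _ hSQ hQ2, smul_zero]
  rw [trace_comp_exp_eq_trace _ _ hsupertrace, trace_eq_sum_mul_finrank hV hVN _ hS,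
    ← sum_neg_one_pow_mul_finrank_eq_sum_finrank_gradedCohomology V hQ2 hgrade (hVN N le_rfl)]
  push_cast
  rfl
end

section
/- For the supersymmetric model on an open chain of length L = 3n + a with a ∈ {-1,0,1}, the cohomology of Q is nonzero only when a ∈ {0,-1}, in which case it is one-dimensional and concentrated at fermion number n; for a = 1 the cohomology vanishes in all degrees. -/
open Finset Matrix

attribute [local instance] Classical.propDecidable

/-- A hard-core fermion configuration: an independent set of the graph `G`. -/
def IndepIn {V : Type*} (G : SimpleGraph V) (S : Finset V) : Prop :=
  ∀ u ∈ S, ∀ v ∈ S, ¬ G.Adj u v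

/-- The matrix of the supercharge `Q` restricted to the sector with `f` particles,
mapping it to the sector with `f+1` particles, in the orthonormal basis of independent
sets, with fermionic signs determined by the site-ordering `ι`. -/
noncomputable def QMatGr {V : Type*} [Fintype V] [DecidableEq V]
    (G : SimpleGraph V) (ι : V → ℕ) (f : ℕ) :
    Matrix {S : Finset V // IndepIn G S ∧ S.card = f + 1}
      {S : Finset V // IndepIn G S ∧ S.card = f} ℂ :=
  fun T S =>
    if S.1 ⊆ T.1 then
      (-1 : ℂ) ^ ((S.1.filter (fun w => ∃ v ∈ T.1 \ S.1, ι w < ι v)).card)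
    else 0

/-- The supercharge as a linear map from the `f`-particle sector to the
`(f+1)`-particle sector. -/
noncomputable def Qgr {V : Type*} [Fintype V] [DecidableEq V]
    (G : SimpleGraph V) (ι : V → ℕ) (f : ℕ) :
    ({S : Finset V // IndepIn G S ∧ S.card = f} → ℂ) →ₗ[ℂ]
      ({S : Finset V // IndepIn G S ∧ S.card = f + 1} → ℂ) :=
  Matrix.toLin' (QMatGr G ι f)

/-- The dimension of the cohomology `ker Q / im Q` of the supercharge at fermion
number `f`. -/
noncomputable def cohDim {V : Type*} [Fintype V] [DecidableEq V]
    (G : SimpleGraph V) (ι : V → ℕ) : ℕ → ℕ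
  | 0 => Module.finrank ℂ (LinearMap.ker (Qgr G ι 0))
  | (f + 1) => Module.finrank ℂ
      (↥(LinearMap.ker (Qgr G ι (f + 1))) ⧸
        Submodule.comap (LinearMap.ker (Qgr G ι (f + 1))).subtype
          (LinearMap.range (Qgr G ι f)))

/-- The open chain of length `L`: vertices `{0,…,L-1}`, with `u ~ v` iff consecutive. -/
def openChain (L : ℕ) : SimpleGraph (Fin L) :=
  SimpleGraph.fromRel (fun u v => u.val + 1 = v.val)

/-!
Appending three sites to an open chain shifts its cohomology up by one degree. View the chain of
length `K + 3` as the chain of length `K` followed by the sites `K`, `K + 1`, `K + 2`. Occupying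
site `K + 1` embeds the complex of the short chain, shifted by one degree, as a deformation
retract: the projection back sends a configuration with `K + 1` occupied to its restriction, and
one with `K + 2` but neither `K` nor `K + 1` occupied to minus its restriction, and annihilating
the particle at the last site `K + 2` is a contracting homotopy. The chains of length `0`, `1`
and `2` have cohomology `ℂ` in degree `0`, zero, and `ℂ` in degree `1`, so by induction the
cohomology in degree `f` is one-dimensional exactly when `3 f ∈ {L, L + 1}`, and zero otherwise.
-/

lemma Matrix.mulVec_mulVec_eq_of_mul_eq {l m n o R : Type*} [Fintype m] [Fintype n]
    [Fintype o] [CommSemiring R] {A : Matrix l m R} {B : Matrix m o R} {C : Matrix l n R}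
    {D : Matrix n o R} (h : A * B = C * D) (x : o → R) :
    A *ᵥ (B *ᵥ x) = C *ᵥ (D *ᵥ x) := by
  rw [Matrix.mulVec_mulVec, h, Matrix.mulVec_mulVec]

section Retract

variable {R A A' C C' : Type*} [Ring R] [AddCommGroup A] [Module R A] [AddCommGroup A']
  [Module R A'] [AddCommGroup C] [Module R C] [AddCommGroup C'] [Module R C']

/-- A deformation retraction (`p ∘ i = id`, and `i ∘ p = id` on cocycles up to coboundaries)
induces an isomorphism in cohomology. -/
noncomputable def quotientKerEquivOfRetract (dC : C →ₗ[R] C') (dA : A →ₗ[R] A')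
    (BC : Submodule R C) (BA : Submodule R A) (i : A →ₗ[R] C) (p : C →ₗ[R] A)
    (hpi : ∀ y, p (i y) = y) (hi : ∀ y ∈ LinearMap.ker dA, i y ∈ LinearMap.ker dC)
    (hp : ∀ x ∈ LinearMap.ker dC, p x ∈ LinearMap.ker dA) (hiB : BA.map i ≤ BC)
    (hpB : BC.map p ≤ BA) (hip : ∀ x ∈ LinearMap.ker dC, x - i (p x) ∈ BC) :
    (LinearMap.ker dC ⧸ BC.comap (LinearMap.ker dC).subtype) ≃ₗ[R]
      (LinearMap.ker dA ⧸ BA.comap (LinearMap.ker dA).subtype) :=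
  let φ := (BA.comap (LinearMap.ker dA).subtype).mkQ ∘ₗ p.restrict hp
  have hφ : Function.Surjective φ := by
    intro z
    obtain ⟨y, rfl⟩ := Submodule.mkQ_surjective _ z
    exact ⟨⟨i y, hi y y.2⟩, congrArg (Submodule.mkQ _) (Subtype.ext (hpi y))⟩
  have hker : LinearMap.ker φ = BC.comap (LinearMap.ker dC).subtype := by
    ext x
    simp only [φ, LinearMap.mem_ker, LinearMap.comp_apply, Submodule.mkQ_apply,
      Submodule.Quotient.mk_eq_zero, Submodule.mem_comap, Submodule.subtype_apply,
      LinearMap.coe_restrict_apply]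
    constructor
    · intro h
      simpa using BC.add_mem (hip x x.2) (hiB ⟨_, h, rfl⟩)
    · exact fun h => hpB ⟨_, h, rfl⟩
  (Submodule.quotEquivOfEq _ _ hker.symm).trans (φ.quotKerEquivOfSurjective hφ)

end Retract

abbrev Sector {V : Type*} (G : SimpleGraph V) (f : ℕ) :=
  {S : Finset V // IndepIn G S ∧ S.card = f}

section Supercharge

variable {V : Type*} {G : SimpleGraph V} {ι : V → ℕ} {f : ℕ}

noncomputable def fermionSign (ι : V → ℕ) (S : Finset V) (v : V) : ℂ :=
  (-1) ^ #{w ∈ S | ι w < ι v}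

lemma fermionSign_insert_of_not_lt [DecidableEq V] {S : Finset V} {z v : V} (h : ¬ ι z < ι v) :
    fermionSign ι (insert z S) v = fermionSign ι S v := by
  rw [fermionSign, fermionSign, Finset.filter_insert, if_neg h]

lemma fermionSign_of_forall_lt {S : Finset V} {v : V} (h : ∀ w ∈ S, ι w < ι v) :
    fermionSign ι S v = (-1) ^ S.card := by
  rw [fermionSign, Finset.filter_true_of_mem h]

lemma IndepIn.mono {S T : Finset V} (h : S ⊆ T) (hT : IndepIn G T) : IndepIn G S :=
  fun u hu v hv => hT u (h hu) v (h hv)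

lemma Sector.exists_eq_insert_of_subset [DecidableEq V] {T : Sector G (f + 1)}
    {S : Sector G f} (h : S.1 ⊆ T.1) : ∃ v ∉ S.1, T.1 = insert v S.1 := by
  obtain ⟨v, hv, hT⟩ := Finset.exists_eq_insert_iff.mpr ⟨h, by rw [S.2.2, T.2.2]⟩
  exact ⟨v, hv, hT.symm⟩

lemma isEmpty_sector_of_card_lt [Fintype V] (h : Fintype.card V < f) :
    IsEmpty (Sector G f) :=
  ⟨fun S => by have := S.1.card_le_univ; omega⟩

instance : Unique (Sector G 0) where
  default := ⟨∅, fun _ hu => absurd hu (Finset.notMem_empty _), Finset.card_empty⟩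
  uniq S := Subtype.ext (Finset.card_eq_zero.mp S.2.2)

noncomputable def sectorOneEquiv : V ≃ Sector G 1 where
  toFun v := ⟨{v}, fun _ hu _ hw => by
    rw [Finset.mem_singleton] at hu hw; subst hu hw; exact G.irrefl, Finset.card_singleton v⟩
  invFun S := (Finset.card_eq_one.mp S.2.2).choose
  left_inv v := by
    have := (Finset.card_eq_one.mp (Finset.card_singleton v)).choose_spec
    exact (Finset.singleton_injective this).symm
  right_inv S := Subtype.ext (Finset.card_eq_one.mp S.2.2).choose_spec.symm

variable [Fintype V] [DecidableEq V]

lemma QMatGr_apply_of_eq_insert {T : Sector G (f + 1)} {S : Sector G f} {v : V}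
    (hv : v ∉ S.1) (hT : T.1 = insert v S.1) : QMatGr G ι f T S = fermionSign ι S.1 v := by
  have hsd : T.1 \ S.1 = {v} := by rw [hT]; exact Finset.insert_sdiff_cancel hv
  rw [QMatGr, if_pos (hT ▸ Finset.subset_insert v S.1), fermionSign]
  simp [hsd]

lemma QMatGr_apply_of_not_subset {T : Sector G (f + 1)} {S : Sector G f}
    (h : ¬ S.1 ⊆ T.1) : QMatGr G ι f T S = 0 := by
  rw [QMatGr, if_neg h]

def Sector.insert (S : Sector G f) (v : V) (hv : v ∉ S.1)
    (h : IndepIn G (Insert.insert v S.1)) : Sector G (f + 1) :=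
  ⟨Insert.insert v S.1, h, by rw [Finset.card_insert_of_notMem hv, S.2.2]⟩

def Sector.erase (S : Sector G (f + 1)) (v : V) (hv : v ∈ S.1) : Sector G f :=
  ⟨S.1.erase v, S.2.1.mono (Finset.erase_subset v S.1), by
    rw [Finset.card_erase_of_mem hv, S.2.2, Nat.add_sub_cancel]⟩

omit [Fintype V] [DecidableEq V] in
lemma Sector.eq_of_subset {S T : Sector G f} (h : S.1 ⊆ T.1) : S = T :=
  Subtype.ext (Finset.eq_of_subset_of_card_le h (by rw [S.2.2, T.2.2]))

lemma QMatGr_insert_apply {T S : Sector G f} {v : V} (hvT : v ∉ T.1)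
    (hT : IndepIn G (insert v T.1)) (hvS : v ∉ S.1) :
    QMatGr G ι f (T.insert v hvT hT) S = if T = S then fermionSign ι S.1 v else 0 := by
  split_ifs with h
  · subst h
    exact QMatGr_apply_of_eq_insert (T := T.insert v hvT hT) hvS rfl
  · refine QMatGr_apply_of_not_subset fun hsub => h (Sector.eq_of_subset ?_).symm
    exact (Finset.subset_insert_iff_of_notMem hvS).mp (hsub : S.1 ⊆ insert v T.1)

lemma QMatGr_apply_erase {T S : Sector G (f + 1)} {v : V} (hvT : v ∈ T.1) (hvS : v ∈ S.1) :
    QMatGr G ι f T (S.erase v hvS) = if T = S then fermionSign ι (S.1.erase v) v else 0 := by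
  split_ifs with h
  · subst h
    exact QMatGr_apply_of_eq_insert (Finset.notMem_erase v _) (Finset.insert_erase hvT).symm
  · refine QMatGr_apply_of_not_subset fun hsub => h (Sector.eq_of_subset ?_).symm
    rw [← Finset.insert_erase hvS]
    exact Finset.insert_subset hvT hsub

/-- Since `v` comes last, adding it to both configurations changes no sign. -/
lemma QMatGr_insert_apply_erase {T S : Sector G (f + 1)} {v : V} (hvT : v ∉ T.1)
    (hT : IndepIn G (insert v T.1)) (hvS : v ∈ S.1) (hv : ∀ w, ι w ≤ ι v) :
    QMatGr G ι (f + 1) (T.insert v hvT hT) S = QMatGr G ι f T (S.erase v hvS) := by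
  by_cases hsub : (S.erase v hvS).1 ⊆ T.1
  · obtain ⟨w, hw, hTw⟩ := Sector.exists_eq_insert_of_subset (T := T) hsub
    have hwS : w ∉ S.1 := fun h => hw (Finset.mem_erase.mpr ⟨fun he => hvT (he ▸ hTw ▸
      Finset.mem_insert_self w _), h⟩)
    rw [QMatGr_apply_of_eq_insert hw hTw, QMatGr_apply_of_eq_insert hwS]
    · conv_lhs => rw [← Finset.insert_erase hvS]
      exact fermionSign_insert_of_not_lt (not_lt.mpr (hv w))
    · rw [show (T.insert v hvT hT).1 = insert v T.1 from rfl, hTw, Finset.insert_comm,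
        show (S.erase v hvS).1 = S.1.erase v from rfl, Finset.insert_erase hvS]
  · rw [QMatGr_apply_of_not_subset hsub, QMatGr_apply_of_not_subset]
    intro h
    exact hsub fun x hx => (Finset.mem_insert.mp (h (Finset.mem_of_mem_erase hx))).resolve_left
      (Finset.ne_of_mem_erase hx)

noncomputable def coboundaries (G : SimpleGraph V) (ι : V → ℕ) :
    (f : ℕ) → Submodule ℂ (Sector G f → ℂ)
  | 0 => ⊥
  | f + 1 => LinearMap.range (Qgr G ι f)

lemma cohDim_eq_finrank_quotient :
    cohDim G ι f = Module.finrank ℂ (LinearMap.ker (Qgr G ι f) ⧸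
      (coboundaries G ι f).comap (LinearMap.ker (Qgr G ι f)).subtype) := by
  cases f with
  | zero =>
    refine ((Submodule.quotEquivOfEqBot _ ?_).finrank_eq).symm
    rw [coboundaries, Submodule.comap_bot, Submodule.ker_subtype]
  | succ f => rfl

lemma cohDim_succ_eq_zero_of_isEmpty [IsEmpty (Sector G (f + 1))] :
    cohDim G ι (f + 1) = 0 := by
  have := (Submodule.finrank_quotient_le (R := ℂ)
    ((coboundaries G ι (f + 1)).comap (LinearMap.ker (Qgr G ι (f + 1))).subtype)).trans
    (Submodule.finrank_le _)
  rw [Module.finrank_fintype_fun_eq_card, Fintype.card_eq_zero] at this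
  exact Nat.le_zero.mp this

lemma Qgr_zero_apply_singleton (x : Sector G 0 → ℂ) (v : V) :
    Qgr G ι 0 x (sectorOneEquiv v) = x default := by
  have hsign : fermionSign ι (default : Sector G 0).1 v = 1 := by
    simp [fermionSign, show (default : Sector G 0).1 = ∅ from rfl]
  rw [Qgr, Matrix.toLin'_apply, Matrix.mulVec, dotProduct, Fintype.sum_unique,
    QMatGr_apply_of_eq_insert (Finset.notMem_empty v) rfl, hsign, one_mul]

lemma ker_Qgr_zero [Nonempty V] : LinearMap.ker (Qgr G ι 0) = ⊥ := by
  refine (Submodule.eq_bot_iff _).mpr fun x hx => funext fun S => ?_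
  have := Qgr_zero_apply_singleton (ι := ι) x (Classical.arbitrary V)
  rw [LinearMap.mem_ker.mp hx, Unique.eq_default S] at *
  exact this.symm

lemma cohDim_zero_of_nonempty [Nonempty V] : cohDim G ι 0 = 0 := by
  rw [cohDim, ker_Qgr_zero, finrank_bot]

lemma cohDim_zero_of_isEmpty [IsEmpty V] : cohDim G ι 0 = 1 := by
  have : IsEmpty (Sector G 1) := isEmpty_sector_of_card_lt (by simp)
  rw [cohDim, LinearMap.ker_eq_top.mpr (Subsingleton.elim _ _), finrank_top,
    Module.finrank_fintype_fun_eq_card, Fintype.card_unique]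

/-- With no independent pairs every one-particle state is a cocycle, and the coboundaries are
the multiples of the sum of all one-particle states. -/
lemma cohDim_one_add_one [Nonempty V] [IsEmpty (Sector G 2)] :
    cohDim G ι 1 + 1 = Fintype.card V := by
  have hker : LinearMap.ker (Qgr G ι 1) = ⊤ := LinearMap.ker_eq_top.mpr (Subsingleton.elim _ _)
  have hrange : Module.finrank ℂ (LinearMap.range (Qgr G ι 0)) = 1 := by
    have := LinearMap.finrank_range_add_finrank_ker (Qgr G ι 0)
    rwa [ker_Qgr_zero, finrank_bot, Module.finrank_fintype_fun_eq_card,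
      Fintype.card_unique] at this
  have hcomap := Submodule.comapSubtypeEquivOfLe (le_top.trans_eq hker.symm :
    LinearMap.range (Qgr G ι 0) ≤ LinearMap.ker (Qgr G ι 1))
  have := Submodule.finrank_quotient_add_finrank
    ((LinearMap.range (Qgr G ι 0)).comap (LinearMap.ker (Qgr G ι 1)).subtype)
  have hcard : Module.finrank ℂ (LinearMap.ker (Qgr G ι 1)) = Fintype.card V := by
    rw [hker, finrank_top, Module.finrank_fintype_fun_eq_card,
      ← Fintype.card_congr sectorOneEquiv]
  rw [hcomap.finrank_eq, hrange, hcard] at this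
  exact this

end Supercharge

namespace OpenChain

local notation "Q[" L "]" => QMatGr (openChain L) Fin.val

lemma adj_iff {L : ℕ} {u v : Fin L} :
    (openChain L).Adj u v ↔ u.val + 1 = v.val ∨ v.val + 1 = u.val := by
  rw [openChain, SimpleGraph.fromRel_adj]
  exact ⟨fun h => h.2, fun h => ⟨fun he => by subst he; omega, h⟩⟩

lemma indepIn_iff {L : ℕ} {S : Finset (Fin L)} :
    IndepIn (openChain L) S ↔ ∀ u ∈ S, ∀ v ∈ S, u.val + 1 ≠ v.val := by
  refine ⟨fun h u hu v hv he => h u hu v hv (adj_iff.mpr (Or.inl he)),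
    fun h u hu v hv huv => ?_⟩
  rcases adj_iff.mp huv with he | he
  exacts [h u hu v hv he, h v hv u hu he]

variable {K f : ℕ}

def lift (S : Finset (Fin K)) : Finset (Fin (K + 3)) := S.map (Fin.castAddEmb 3)

def outerSite (K : ℕ) (j : Fin 2) : Fin (K + 3) := ⟨K + 1 + j, by omega⟩

lemma val_lt_of_mem_lift {S : Finset (Fin K)} {x : Fin (K + 3)} (hx : x ∈ lift S) :
    x.val < K := by
  obtain ⟨y, -, rfl⟩ := Finset.mem_map.mp hx
  simp

lemma outerSite_notMem_lift (j : Fin 2) (S : Finset (Fin K)) : outerSite K j ∉ lift S :=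
  fun h => by have := val_lt_of_mem_lift h; simp only [outerSite] at this; omega

lemma outerSite_injective : Function.Injective (outerSite K) := fun i j h => by
  have := congrArg Fin.val h; simp [outerSite] at this; omega

lemma indepIn_lift_iff {S : Finset (Fin K)} :
    IndepIn (openChain (K + 3)) (lift S) ↔ IndepIn (openChain K) S := by
  simp only [indepIn_iff, lift, Finset.forall_mem_map, Fin.castAddEmb_apply, Fin.val_castAdd]

lemma indepIn_insert_outerSite_lift (j : Fin 2) {S : Finset (Fin K)}
    (hS : IndepIn (openChain K) S) :
    IndepIn (openChain (K + 3)) (insert (outerSite K j) (lift S)) := by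
  have hlift := indepIn_iff.mp (indepIn_lift_iff.mpr hS)
  rw [indepIn_iff]
  intro u hu v hv
  rcases Finset.mem_insert.mp hu with rfl | hu <;> rcases Finset.mem_insert.mp hv with rfl | hv
  · simp
  · have := val_lt_of_mem_lift hv; simp [outerSite]; omega
  · have := val_lt_of_mem_lift hu; simp [outerSite]; omega
  · exact hlift u hu v hv

def extend (j : Fin 2) (S : Sector (openChain K) f) : Sector (openChain (K + 3)) (f + 1) :=
  ⟨insert (outerSite K j) (lift S.1), indepIn_insert_outerSite_lift j S.2.1, by
    rw [Finset.card_insert_of_notMem (outerSite_notMem_lift j _), lift, Finset.card_map, S.2.2]⟩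

lemma extend_val (j : Fin 2) (S : Sector (openChain K) f) :
    (extend j S).1 = insert (outerSite K j) (lift S.1) := rfl

lemma outerSite_mem_extend_iff {i j : Fin 2} {S : Sector (openChain K) f} :
    outerSite K i ∈ (extend j S).1 ↔ i = j := by
  rw [extend_val, Finset.mem_insert, outerSite_injective.eq_iff]
  exact or_iff_left (outerSite_notMem_lift i _)

lemma extend_injective (j : Fin 2) : Function.Injective (extend (K := K) (f := f) j) := by
  intro S T h
  have h' := congrArg (fun S => (Finset.erase S.1 (outerSite K j))) h
  simp only [extend_val, Finset.erase_insert (outerSite_notMem_lift j _)] at h'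
  exact Subtype.ext (Finset.map_injective _ h')

lemma extend_not_subset_extend {g : ℕ} {i j : Fin 2} (hij : i ≠ j) (S : Sector (openChain K) f)
    (T : Sector (openChain K) g) :
    ¬ (extend i S).1 ⊆ (extend j T).1 := fun hsub =>
  hij (outerSite_mem_extend_iff.mp (hsub (outerSite_mem_extend_iff.mpr rfl)))

lemma extend_ne_extend {S T : Sector (openChain K) f} : extend 0 S ≠ extend 1 T := fun h =>
  extend_not_subset_extend (i := 0) (j := 1) (by decide) S T (by rw [h])

lemma exists_eq_extend {j : Fin 2} (S : Sector (openChain (K + 3)) (f + 1))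
    (hj : outerSite K j ∈ S.1) (hlt : ∀ x ∈ S.1, x ≠ outerSite K j → x.val < K) :
    ∃ S', S = extend j S' := by
  obtain ⟨u, -, hu⟩ := Finset.subset_map_iff.mp (show S.1.erase (outerSite K j) ⊆
      (Finset.univ : Finset (Fin K)).map (Fin.castAddEmb 3) from fun x hx =>
    Finset.mem_map.mpr ⟨⟨x, hlt x (Finset.mem_of_mem_erase hx) (Finset.ne_of_mem_erase hx)⟩,
      Finset.mem_univ _, Fin.ext (by simp)⟩)
  have hS : S.1 = insert (outerSite K j) (lift u) := by rw [lift, ← hu, Finset.insert_erase hj]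
  have hind : IndepIn (openChain K) u :=
    indepIn_lift_iff.mp (S.2.1.mono (hS ▸ Finset.subset_insert _ _))
  have hcard : u.card = f := by
    have := S.2.2
    rwa [hS, Finset.card_insert_of_notMem (outerSite_notMem_lift j _), lift, Finset.card_map,
      Nat.add_right_cancel_iff] at this
  exact ⟨⟨u, hind, hcard⟩, Subtype.ext hS⟩

lemma exists_eq_extend_zero (S : Sector (openChain (K + 3)) (f + 1))
    (h : outerSite K 0 ∈ S.1) : ∃ S', S = extend 0 S' := by
  refine exists_eq_extend S h fun x hx hne => ?_
  have h1 := indepIn_iff.mp S.2.1 x hx _ h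
  have h2 := indepIn_iff.mp S.2.1 _ h x hx
  have h3 : x.val ≠ K + 1 := fun he => hne (Fin.ext (by simp [outerSite, he]))
  simp only [outerSite, Fin.val_zero] at h1 h2
  omega

lemma fermionSign_lift (S : Finset (Fin K)) (v : Fin K) :
    fermionSign Fin.val (lift S) (Fin.castAdd 3 v) = fermionSign Fin.val S v := by
  simp only [fermionSign, lift, Finset.filter_map, Finset.card_map]
  rfl

lemma Q_extend_extend (j : Fin 2) (T : Sector (openChain K) (f + 1))
    (S : Sector (openChain K) f) : Q[K + 3] (f + 1) (extend j T) (extend j S) = Q[K] f T S := by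
  by_cases h : S.1 ⊆ T.1
  · obtain ⟨v, hv, hT⟩ := Sector.exists_eq_insert_of_subset h
    have hv' : Fin.castAdd 3 v ∉ (extend j S).1 := by
      rw [extend_val, Finset.mem_insert, not_or]
      exact ⟨fun he => by have := congrArg Fin.val he; simp [outerSite] at this; omega,
        fun hm => hv ((Finset.mem_map' _).mp hm)⟩
    rw [QMatGr_apply_of_eq_insert hv hT, QMatGr_apply_of_eq_insert hv' (by
      rw [extend_val, extend_val, hT, lift, Finset.map_insert, Finset.insert_comm]; rfl),
      extend_val, fermionSign_insert_of_not_lt (by simp [outerSite]; omega), fermionSign_lift]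
  · rw [QMatGr_apply_of_not_subset h, QMatGr_apply_of_not_subset]
    rw [extend_val, extend_val, Finset.insert_subset_insert_iff (outerSite_notMem_lift j _),
      lift, lift, Finset.map_subset_map]
    exact h

lemma Q_extend_apply_of_notMem {j : Fin 2} (W : Sector (openChain K) f)
    {S : Sector (openChain (K + 3)) f} (h : outerSite K j ∉ S.1) :
    Q[K + 3] f (extend j W) S = if S.1 = lift W.1 then (-1) ^ f else 0 := by
  split_ifs with hS
  · rw [QMatGr_apply_of_eq_insert h (by rw [extend_val, hS]), fermionSign_of_forall_lt, S.2.2]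
    intro w hw
    have := val_lt_of_mem_lift (hS ▸ hw)
    simp only [outerSite]
    omega
  · refine QMatGr_apply_of_not_subset fun hsub => hS ?_
    refine Finset.eq_of_subset_of_card_le
      ((Finset.subset_insert_iff_of_notMem h).mp (extend_val j W ▸ hsub)) ?_
    rw [lift, Finset.card_map, S.2.2, W.2.2]

lemma Q_extend_apply_of_forall_ne {j : Fin 2} (W : Sector (openChain K) (f + 1))
    {S : Sector (openChain (K + 3)) (f + 1)} (h : ∀ S', S ≠ extend j S') :
    Q[K + 3] (f + 1) (extend j W) S = if S.1 = lift W.1 then (-1) ^ (f + 1) else 0 := by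
  by_cases hj : outerSite K j ∈ S.1
  · have hS : S.1 ≠ lift W.1 := fun hS => outerSite_notMem_lift j W.1 (hS ▸ hj)
    rw [if_neg hS]
    refine QMatGr_apply_of_not_subset fun hsub => ?_
    obtain ⟨S', hS'⟩ := exists_eq_extend S hj fun x hx hne => val_lt_of_mem_lift
      ((Finset.mem_insert.mp (extend_val j W ▸ hsub hx)).resolve_left hne)
    exact h S' hS'
  · exact Q_extend_apply_of_notMem W hj

lemma indepIn_insert_outerSite_one {T : Finset (Fin (K + 3))}
    (hT : IndepIn (openChain (K + 3)) T) (hm : outerSite K 0 ∉ T) :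
    IndepIn (openChain (K + 3)) (insert (outerSite K 1) T) := by
  have hT := indepIn_iff.mp hT
  have hne : ∀ x ∈ T, x.val ≠ K + 1 := fun x hx he => hm (by
    convert hx; exact Fin.ext (by simp [outerSite, he]))
  rw [indepIn_iff]
  intro u hu v hv
  rcases Finset.mem_insert.mp hu with rfl | hu <;> rcases Finset.mem_insert.mp hv with rfl | hv
  · simp
  · have := hne v hv; have := v.isLt; simp [outerSite]; omega
  · have := hne u hu; simp [outerSite]; omega
  · exact hT u hu v hv

lemma outerSite_zero_notMem_of_one_mem {g : ℕ} (S : Sector (openChain (K + 3)) g)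
    (h : outerSite K 1 ∈ S.1) : outerSite K 0 ∉ S.1 := fun h0 =>
  indepIn_iff.mp S.2.1 _ h0 _ h (by simp [outerSite])

section Maps

variable {α β : Type*}

noncomputable def incl (K f : ℕ) :
    Matrix (Sector (openChain (K + 3)) (f + 1)) (Sector (openChain K) f) ℂ :=
  fun S S' => if S = extend 0 S' then 1 else 0

/- Occupying `K + 1` or `K + 2` in `lift W` gives the same sign, so the two terms cancel on
`Q (lift W)`: this is what makes `proj` commute with `Q`. -/
noncomputable def proj (K f : ℕ) :
    Matrix (Sector (openChain K) f) (Sector (openChain (K + 3)) (f + 1)) ℂ :=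
  fun S' S => (if S = extend 0 S' then 1 else 0) - (if S = extend 1 S' then 1 else 0)

noncomputable def removeTip (K f : ℕ) :
    Matrix (Sector (openChain (K + 3)) f) (Sector (openChain (K + 3)) (f + 1)) ℂ :=
  fun S T => if T.1 = insert (outerSite K 1) S.1 then (-1) ^ f else 0

lemma mul_incl_apply (M : Matrix α (Sector (openChain (K + 3)) (f + 1)) ℂ) (T : α)
    (S' : Sector (openChain K) f) : (M * incl K f) T S' = M T (extend 0 S') := by
  simp [Matrix.mul_apply, incl]

lemma incl_mul_apply_extend (M : Matrix (Sector (openChain K) f) β ℂ)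
    (T : Sector (openChain K) f) (S : β) : (incl K f * M) (extend 0 T) S = M T S := by
  simp [Matrix.mul_apply, incl, (extend_injective 0).eq_iff]

lemma incl_mul_apply_of_notMem (M : Matrix (Sector (openChain K) f) β ℂ)
    {T : Sector (openChain (K + 3)) (f + 1)} (h : outerSite K 0 ∉ T.1) (S : β) :
    (incl K f * M) T S = 0 := by
  rw [Matrix.mul_apply]
  refine Finset.sum_eq_zero fun T' _ => ?_
  have hT : T ≠ extend 0 T' := fun he => h (he ▸ outerSite_mem_extend_iff.mpr rfl)
  rw [incl, if_neg hT, zero_mul]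

lemma proj_mul_apply (M : Matrix (Sector (openChain (K + 3)) (f + 1)) β ℂ)
    (W : Sector (openChain K) f) (S : β) :
    (proj K f * M) W S = M (extend 0 W) S - M (extend 1 W) S := by
  simp [Matrix.mul_apply, proj, sub_mul, Finset.sum_sub_distrib]

lemma mul_proj_apply_extend_zero (M : Matrix α (Sector (openChain K) f) ℂ) (W : α)
    (S : Sector (openChain K) f) : (M * proj K f) W (extend 0 S) = M W S := by
  simp [Matrix.mul_apply, proj, (extend_injective 0).eq_iff, extend_ne_extend]

lemma mul_proj_apply_extend_one (M : Matrix α (Sector (openChain K) f) ℂ) (W : α)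
    (S : Sector (openChain K) f) : (M * proj K f) W (extend 1 S) = - M W S := by
  simp [Matrix.mul_apply, proj, (extend_injective 1).eq_iff, extend_ne_extend.symm]

lemma mul_proj_apply_of_forall_ne (M : Matrix α (Sector (openChain K) f) ℂ) (W : α)
    {S : Sector (openChain (K + 3)) (f + 1)} (h : ∀ j S', S ≠ extend j S') :
    (M * proj K f) W S = 0 := by
  simp [Matrix.mul_apply, proj, h]

lemma removeTip_mul_apply (M : Matrix (Sector (openChain (K + 3)) (f + 1 + 1)) β ℂ)
    {T : Sector (openChain (K + 3)) (f + 1)} (hm : outerSite K 0 ∉ T.1)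
    (ht : outerSite K 1 ∉ T.1) (S : β) :
    (removeTip K (f + 1) * M) T S =
      (-1) ^ (f + 1) * M (T.insert _ ht (indepIn_insert_outerSite_one T.2.1 hm)) S := by
  set U₀ := T.insert _ ht (indepIn_insert_outerSite_one T.2.1 hm)
  rw [Matrix.mul_apply, Finset.sum_eq_single_of_mem U₀ (Finset.mem_univ _)]
  · rw [removeTip, if_pos (show U₀.1 = insert (outerSite K 1) T.1 from rfl)]
  · intro U _ hU
    have hU' : U.1 ≠ insert (outerSite K 1) T.1 := fun he => hU (Subtype.ext he)
    rw [removeTip, if_neg hU', zero_mul]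

lemma removeTip_mul_apply_of_mem (M : Matrix (Sector (openChain (K + 3)) (f + 1 + 1)) β ℂ)
    {T : Sector (openChain (K + 3)) (f + 1)}
    (h : outerSite K 0 ∈ T.1 ∨ outerSite K 1 ∈ T.1) (S : β) :
    (removeTip K (f + 1) * M) T S = 0 := by
  rw [Matrix.mul_apply]
  refine Finset.sum_eq_zero fun U _ => ?_
  rw [removeTip, if_neg, zero_mul]
  intro hU
  rcases h with h | h
  · exact outerSite_zero_notMem_of_one_mem U (hU ▸ Finset.mem_insert_self _ _)
      (hU ▸ Finset.mem_insert_of_mem h)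
  · have := U.2.2
    rw [hU, Finset.insert_eq_of_mem h, T.2.2] at this
    omega

lemma mul_removeTip_apply (M : Matrix α (Sector (openChain (K + 3)) f) ℂ) (T : α)
    {S : Sector (openChain (K + 3)) (f + 1)} (h : outerSite K 1 ∈ S.1) :
    (M * removeTip K f) T S = M T (S.erase _ h) * (-1) ^ f := by
  rw [Matrix.mul_apply, Finset.sum_eq_single_of_mem (S.erase _ h) (Finset.mem_univ _)]
  · rw [removeTip, if_pos (show S.1 = insert _ (S.erase _ h).1 from (Finset.insert_erase h).symm)]
  · intro U _ hU
    rw [removeTip, if_neg, mul_zero]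
    intro (he : S.1 = insert (outerSite K 1) U.1)
    refine hU (Subtype.ext ?_)
    rw [show (S.erase _ h).1 = S.1.erase _ from rfl, he, Finset.erase_insert fun hm => ?_]
    have := U.2.2
    rw [← Finset.insert_eq_of_mem hm, ← he, S.2.2] at this
    omega

lemma mul_removeTip_apply_of_notMem (M : Matrix α (Sector (openChain (K + 3)) f) ℂ) (T : α)
    {S : Sector (openChain (K + 3)) (f + 1)} (h : outerSite K 1 ∉ S.1) :
    (M * removeTip K f) T S = 0 := by
  rw [Matrix.mul_apply]
  refine Finset.sum_eq_zero fun U _ => ?_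
  have hU : S.1 ≠ insert (outerSite K 1) U.1 := fun he => h (he ▸ Finset.mem_insert_self _ _)
  rw [removeTip, if_neg hU, mul_zero]

end Maps

lemma fermionSign_outerSite_one {A : Finset (Fin (K + 3))} (h : outerSite K 1 ∉ A) :
    fermionSign Fin.val A (outerSite K 1) = (-1) ^ A.card := by
  refine fermionSign_of_forall_lt fun w hw => ?_
  have hne : w.val ≠ K + 2 := fun he => h (by convert hw; exact Fin.ext (by simp [outerSite, he]))
  have := w.isLt
  simp only [outerSite, Fin.val_one]
  omega

lemma proj_mul_incl : proj K f * incl K f = 1 := by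
  ext W S'
  simp [proj_mul_apply, Matrix.one_apply, incl, (extend_injective 0).eq_iff,
    extend_ne_extend.symm]

lemma Q_mul_incl : Q[K + 3] (f + 1) * incl K f = incl K (f + 1) * Q[K] f := by
  ext T S'
  rw [mul_incl_apply]
  by_cases h : outerSite K 0 ∈ T.1
  · obtain ⟨T', rfl⟩ := exists_eq_extend_zero T h
    rw [incl_mul_apply_extend, Q_extend_extend]
  · rw [incl_mul_apply_of_notMem _ h,
      QMatGr_apply_of_not_subset fun hsub => h (hsub (outerSite_mem_extend_iff.mpr rfl))]

lemma Q_mul_proj : Q[K] f * proj K f = proj K (f + 1) * Q[K + 3] (f + 1) := by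
  ext W S
  rw [proj_mul_apply]
  by_cases h0 : ∃ S', S = extend 0 S'
  · obtain ⟨S', rfl⟩ := h0
    rw [mul_proj_apply_extend_zero, Q_extend_extend,
      QMatGr_apply_of_not_subset (extend_not_subset_extend (i := 0) (j := 1) (by decide) S' W),
      sub_zero]
  by_cases h1 : ∃ S', S = extend 1 S'
  · obtain ⟨S', rfl⟩ := h1
    rw [mul_proj_apply_extend_one, Q_extend_extend,
      QMatGr_apply_of_not_subset (extend_not_subset_extend (i := 1) (j := 0) (by decide) S' W),
      zero_sub]
  simp only [not_exists] at h0 h1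
  rw [mul_proj_apply_of_forall_ne _ _ (fun j => by fin_cases j; exacts [h0, h1]),
    Q_extend_apply_of_forall_ne _ h0, Q_extend_apply_of_forall_ne _ h1, sub_self]

lemma proj_mul_Q_zero : proj K 0 * Q[K + 3] 0 = 0 := by
  ext W S
  have hS : ∀ j, outerSite K j ∉ S.1 := fun j => by simp [Finset.card_eq_zero.mp S.2.2]
  rw [proj_mul_apply, Q_extend_apply_of_notMem _ (hS 0), Q_extend_apply_of_notMem _ (hS 1),
    sub_self, Matrix.zero_apply]

lemma Q_extend_zero_apply_erase (T' : Sector (openChain K) f)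
    {S : Sector (openChain (K + 3)) (f + 1)} (hS : outerSite K 1 ∈ S.1) :
    Q[K + 3] f (extend 0 T') (S.erase _ hS) = if S = extend 1 T' then (-1) ^ f else 0 := by
  have hmid := outerSite_zero_notMem_of_one_mem S hS
  split_ifs with h
  · have herase : (S.erase _ hS).1 = lift T'.1 := by
      rw [show (S.erase _ hS).1 = S.1.erase _ from rfl, h, extend_val,
        Finset.erase_insert (outerSite_notMem_lift 1 _)]
    rw [QMatGr_apply_of_eq_insert (v := outerSite K 0) (herase ▸ outerSite_notMem_lift 0 _)
      (by rw [herase, extend_val]), fermionSign_of_forall_lt, (S.erase _ hS).2.2]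
    intro w hw
    have := val_lt_of_mem_lift (herase ▸ hw)
    simp only [outerSite, Fin.val_zero]
    omega
  · refine QMatGr_apply_of_not_subset fun hsub => h (Subtype.ext ?_)
    have hsub' : S.1.erase (outerSite K 1) ⊆ lift T'.1 := fun x hx =>
      (Finset.mem_insert.mp (hsub hx)).resolve_left fun he =>
        hmid (he ▸ Finset.mem_of_mem_erase hx)
    have heq := Finset.eq_of_subset_of_card_le hsub' (by
      rw [lift, Finset.card_map, T'.2.2, Finset.card_erase_of_mem hS, S.2.2]; rfl)
    rw [extend_val, ← heq, Finset.insert_erase hS]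

lemma homotopy_apply_of_tip_mem {T S : Sector (openChain (K + 3)) (f + 1)}
    (hS : outerSite K 1 ∈ S.1) :
    (removeTip K (f + 1) * Q[K + 3] (f + 1)) T S + (Q[K + 3] f * removeTip K f) T S
      + (incl K f * proj K f) T S = if T = S then 1 else 0 := by
  rw [mul_removeTip_apply _ _ hS]
  by_cases hT : outerSite K 1 ∈ T.1
  · rw [removeTip_mul_apply_of_mem _ (Or.inr hT),
      incl_mul_apply_of_notMem _ (outerSite_zero_notMem_of_one_mem T hT),
      QMatGr_apply_erase hT hS]
    split_ifs
    · rw [fermionSign_outerSite_one (Finset.notMem_erase _ _), Finset.card_erase_of_mem hS,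
        S.2.2, Nat.add_sub_cancel, ← pow_add, ← two_mul, pow_mul]
      norm_num
    · ring
  have hTS : T ≠ S := fun h => hT (h ▸ hS)
  by_cases hm : outerSite K 0 ∈ T.1
  · obtain ⟨T', rfl⟩ := exists_eq_extend_zero T hm
    have hS0 : S ≠ extend 0 T' := fun h =>
      outerSite_zero_notMem_of_one_mem S hS (h ▸ outerSite_mem_extend_iff.mpr rfl)
    rw [removeTip_mul_apply_of_mem _ (Or.inl hm), incl_mul_apply_extend, proj,
      Q_extend_zero_apply_erase _ hS, if_neg hS0, if_neg hTS]
    split_ifs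
    · rw [← pow_add, ← two_mul, pow_mul]
      norm_num
    · ring
  · rw [removeTip_mul_apply _ hm hT, incl_mul_apply_of_notMem _ hm,
      QMatGr_insert_apply_erase hT _ hS fun w => by
        have := w.isLt; simp only [outerSite, Fin.val_one]; omega,
      if_neg hTS, pow_succ]
    ring

lemma homotopy_apply_of_tip_notMem {T S : Sector (openChain (K + 3)) (f + 1)}
    (hS : outerSite K 1 ∉ S.1) :
    (removeTip K (f + 1) * Q[K + 3] (f + 1)) T S + (Q[K + 3] f * removeTip K f) T S
      + (incl K f * proj K f) T S = if T = S then 1 else 0 := by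
  rw [mul_removeTip_apply_of_notMem _ _ hS, add_zero]
  by_cases hT : outerSite K 1 ∈ T.1
  · rw [removeTip_mul_apply_of_mem _ (Or.inr hT),
      incl_mul_apply_of_notMem _ (outerSite_zero_notMem_of_one_mem T hT),
      if_neg fun h : T = S => hS (h ▸ hT), add_zero]
  by_cases hm : outerSite K 0 ∈ T.1
  · obtain ⟨T', rfl⟩ := exists_eq_extend_zero T hm
    have hS1 : S ≠ extend 1 T' := fun h => hS (h ▸ outerSite_mem_extend_iff.mpr rfl)
    rw [removeTip_mul_apply_of_mem _ (Or.inl hm), incl_mul_apply_extend, proj, if_neg hS1,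
      zero_add, sub_zero]
    simp only [eq_comm]
  · rw [removeTip_mul_apply _ hm hT, incl_mul_apply_of_notMem _ hm, QMatGr_insert_apply hT _ hS,
      add_zero]
    split_ifs
    · rw [fermionSign_outerSite_one hS, S.2.2, ← pow_add, ← two_mul, pow_mul]
      norm_num
    · ring

lemma removeTip_mul_Q_add_Q_mul_removeTip_add_incl_mul_proj :
    removeTip K (f + 1) * Q[K + 3] (f + 1) + Q[K + 3] f * removeTip K f
      + incl K f * proj K f = 1 := by
  ext T S
  rw [Matrix.add_apply, Matrix.add_apply, Matrix.one_apply]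
  by_cases hS : outerSite K 1 ∈ S.1
  · exact homotopy_apply_of_tip_mem hS
  · exact homotopy_apply_of_tip_notMem hS

lemma Qgr_apply (L f : ℕ) (x : Sector (openChain L) f → ℂ) :
    Qgr (openChain L) Fin.val f x = Q[L] f *ᵥ x := rfl

lemma incl_mem_ker {y : Sector (openChain K) f → ℂ}
    (hy : y ∈ LinearMap.ker (Qgr (openChain K) Fin.val f)) :
    incl K f *ᵥ y ∈ LinearMap.ker (Qgr (openChain (K + 3)) Fin.val (f + 1)) := by
  rw [LinearMap.mem_ker, Qgr_apply] at hy ⊢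
  rw [Matrix.mulVec_mulVec_eq_of_mul_eq Q_mul_incl, hy, Matrix.mulVec_zero]

lemma proj_mem_ker {x : Sector (openChain (K + 3)) (f + 1) → ℂ}
    (hx : x ∈ LinearMap.ker (Qgr (openChain (K + 3)) Fin.val (f + 1))) :
    proj K f *ᵥ x ∈ LinearMap.ker (Qgr (openChain K) Fin.val f) := by
  rw [LinearMap.mem_ker, Qgr_apply] at hx ⊢
  rw [Matrix.mulVec_mulVec_eq_of_mul_eq Q_mul_proj, hx, Matrix.mulVec_zero]

lemma map_incl_coboundaries_le :
    (coboundaries (openChain K) Fin.val f).map (Matrix.toLin' (incl K f)) ≤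
      coboundaries (openChain (K + 3)) Fin.val (f + 1) := by
  cases f with
  | zero => simp [coboundaries]
  | succ f =>
    rintro _ ⟨_, ⟨y, rfl⟩, rfl⟩
    exact ⟨incl K f *ᵥ y, by
      rw [Qgr_apply, Matrix.toLin'_apply, Qgr_apply,
        Matrix.mulVec_mulVec_eq_of_mul_eq Q_mul_incl]⟩

lemma map_proj_coboundaries_le :
    (coboundaries (openChain (K + 3)) Fin.val (f + 1)).map (Matrix.toLin' (proj K f)) ≤
      coboundaries (openChain K) Fin.val f := by
  rintro _ ⟨_, ⟨y, rfl⟩, rfl⟩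
  cases f with
  | zero =>
    simp [coboundaries, Qgr_apply, Matrix.mulVec_mulVec, proj_mul_Q_zero]
  | succ f =>
    exact ⟨proj K f *ᵥ y, by
      rw [Qgr_apply, Matrix.toLin'_apply, Qgr_apply,
        Matrix.mulVec_mulVec_eq_of_mul_eq Q_mul_proj]⟩

lemma sub_incl_proj_mem_coboundaries {x : Sector (openChain (K + 3)) (f + 1) → ℂ}
    (hx : x ∈ LinearMap.ker (Qgr (openChain (K + 3)) Fin.val (f + 1))) :
    x - incl K f *ᵥ (proj K f *ᵥ x) ∈ coboundaries (openChain (K + 3)) Fin.val (f + 1) := by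
  refine ⟨removeTip K f *ᵥ x, ?_⟩
  have h := congrArg (· *ᵥ x)
    (removeTip_mul_Q_add_Q_mul_removeTip_add_incl_mul_proj (K := K) (f := f))
  simp only [Matrix.add_mulVec, ← Matrix.mulVec_mulVec, Matrix.one_mulVec] at h
  rw [LinearMap.mem_ker, Qgr_apply] at hx
  rw [hx, Matrix.mulVec_zero, zero_add] at h
  exact eq_sub_of_add_eq h

lemma cohDim_add_three (K f : ℕ) :
    cohDim (openChain (K + 3)) Fin.val (f + 1) = cohDim (openChain K) Fin.val f := by
  rw [cohDim_eq_finrank_quotient, cohDim_eq_finrank_quotient]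
  refine (quotientKerEquivOfRetract _ _ _ _ (Matrix.toLin' (incl K f))
    (Matrix.toLin' (proj K f)) (fun y => ?_) (fun _ => incl_mem_ker) (fun _ => proj_mem_ker)
    map_incl_coboundaries_le map_proj_coboundaries_le
    (fun _ => sub_incl_proj_mem_coboundaries)).finrank_eq
  rw [Matrix.toLin'_apply, Matrix.toLin'_apply, Matrix.mulVec_mulVec, proj_mul_incl,
    Matrix.one_mulVec]

lemma cohDim_zero (L : ℕ) : cohDim (openChain L) Fin.val 0 = if L = 0 then 1 else 0 := by
  rcases L with _ | L
  · exact cohDim_zero_of_isEmpty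
  · exact cohDim_zero_of_nonempty

lemma isEmpty_sector_two (f : ℕ) : IsEmpty (Sector (openChain 2) (f + 2)) := by
  refine ⟨fun S => ?_⟩
  have hle := S.1.card_le_univ
  rw [S.2.2, Fintype.card_fin] at hle
  have huniv := Finset.eq_univ_of_card S.1 (by rw [S.2.2, Fintype.card_fin]; omega)
  exact S.2.1 0 (huniv ▸ Finset.mem_univ _) 1 (huniv ▸ Finset.mem_univ _)
    (adj_iff.mpr (Or.inl rfl))

lemma cohDim_one_succ (f : ℕ) : cohDim (openChain 1) Fin.val (f + 1) = 0 := by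
  rcases f with _ | f
  · have : IsEmpty (Sector (openChain 1) 2) := isEmpty_sector_of_card_lt (by simp)
    simpa using cohDim_one_add_one (G := openChain 1) (ι := Fin.val)
  · have : IsEmpty (Sector (openChain 1) (f + 1 + 1)) := isEmpty_sector_of_card_lt (by simp)
    exact cohDim_succ_eq_zero_of_isEmpty

lemma cohDim_two_succ (f : ℕ) :
    cohDim (openChain 2) Fin.val (f + 1) = if f = 0 then 1 else 0 := by
  rcases f with _ | f
  · have := isEmpty_sector_two 0
    simpa using cohDim_one_add_one (G := openChain 2) (ι := Fin.val)
  · have : IsEmpty (Sector (openChain 2) (f + 1 + 1)) := isEmpty_sector_two f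
    exact cohDim_succ_eq_zero_of_isEmpty

theorem cohDim_eq (L f : ℕ) :
    cohDim (openChain L) Fin.val f = if 3 * f = L ∨ 3 * f = L + 1 then 1 else 0 := by
  induction f generalizing L with
  | zero => rw [cohDim_zero]; congr 1; simp; omega
  | succ f ih =>
    match L with
    | 0 =>
      have : IsEmpty (Sector (openChain 0) (f + 1)) := isEmpty_sector_of_card_lt (by simp)
      rw [cohDim_succ_eq_zero_of_isEmpty, if_neg (by omega)]
    | 1 => rw [cohDim_one_succ, if_neg (by omega)]
    | 2 => rw [cohDim_two_succ]; congr 1; simp; omega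
    | K + 3 => rw [cohDim_add_three, ih]; congr 1; simp; omega

end OpenChain

theorem cohomology_open_chain_general (L n : ℕ) (a : ℤ)
    (hLa : (L : ℤ) = 3 * n + a) :
    (a = 1 → ∀ f : ℕ, cohDim (openChain L) Fin.val f = 0) ∧
    ((a = 0 ∨ a = -1) →
      cohDim (openChain L) Fin.val n = 1 ∧
      ∀ f : ℕ, f ≠ n → cohDim (openChain L) Fin.val f = 0) := by
  refine ⟨fun ha f => ?_, fun ha => ⟨?_, fun f hf => ?_⟩⟩ <;> rw [OpenChain.cohDim_eq]
  · rw [if_neg (by omega)]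
  · rw [if_pos (by omega)]
  · rw [if_neg (by omega)]

/-- For the supersymmetric model on an open chain of length `L = 3n + a` with
`a ∈ {-1,0,1}`, the cohomology of `Q` is nonzero only when `a ∈ {0,-1}`, in which
case it is one-dimensional and concentrated at fermion number `n`; for `a = 1` the
cohomology vanishes in all degrees. -/
theorem cohomology_open_chain (L n : ℕ) (a : ℤ)
    (ha : a = -1 ∨ a = 0 ∨ a = 1) (hLa : (L : ℤ) = 3 * n + a) :
    (a = 1 → ∀ f : ℕ, cohDim (openChain L) Fin.val f = 0) ∧
    ((a = 0 ∨ a = -1) →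
      cohDim (openChain L) Fin.val n = 1 ∧
      ∀ f : ℕ, f ≠ n → cohDim (openChain L) Fin.val f = 0) :=
  cohomology_open_chain_general L n a hLa
end
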